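/- arXiv:1604.08192 — 3 statements merged into one kernel-verified Lean document; each statement's English description precedes it below -/
import Mathlib

section
/- Let H be a finite-dimensional complex Hilbert space, U unitary, Δ, Π orthogonal projections, M = Δ U† Π U Δ, and let N ≥ 1 be an integer. Then Δ [(Δ U† Π U)†]^N (Δ U† Π U)^N Δ = M^{2N}. -/
open Matrix

lemma swap_pow {n : ℕ} (D Q : Matrix (Fin n) (Fin n) ℂ) :
    ∀ k : ℕ, D * (Q * D) ^ k = (D * Q) ^ k * D
  | 0 => by simp
  | (k+1) => by
      calc D * (Q * D) ^ (k + 1) = D * Q * (D * (Q * D) ^ k) := by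
            rw [pow_succ', ← mul_assoc, ← mul_assoc, mul_assoc (D * Q) D]
        _ = D * Q * ((D * Q) ^ k * D) := by rw [swap_pow D Q k]
        _ = (D * Q) ^ (k + 1) * D := by rw [← mul_assoc, ← pow_succ']

lemma pow_proj {n : ℕ} (D Q : Matrix (Fin n) (Fin n) ℂ) (hD2 : D * D = D) :
    ∀ m : ℕ, (D * Q) ^ (m + 1) * D = (D * Q * D) ^ (m + 1)
  | 0 => by simp
  | (m+1) => by
      have key : D * Q * (D * Q * D) = (D * Q * D) * (D * Q * D) := by
        rw [mul_assoc (D * Q) D (D * Q * D), ← mul_assoc D (D * Q) D,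
          ← mul_assoc D D Q, hD2]
      calc (D * Q) ^ (m + 2) * D = (D * Q) * ((D * Q) ^ (m + 1) * D) := by
            rw [pow_succ', mul_assoc]
        _ = (D * Q) * (D * Q * D) ^ (m + 1) := by rw [pow_proj D Q hD2 m]
        _ = ((D * Q) * (D * Q * D)) * (D * Q * D) ^ m := by rw [pow_succ' (D * Q * D) m, ← mul_assoc]
        _ = ((D * Q * D) * (D * Q * D)) * (D * Q * D) ^ m := by rw [key]
        _ = (D * Q * D) ^ (m + 2) := by
            rw [mul_assoc, ← pow_succ', ← pow_succ']

/-- The operator identity `Δ ((Δ U† Π U)†)^N (Δ U† Π U)^N Δ = M^(2N)` underlying the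
AND-type repetition procedure. -/
theorem stmt3 {n : ℕ} (U D P : Matrix (Fin n) (Fin n) ℂ)
    (hU : U ∈ Matrix.unitaryGroup (Fin n) ℂ)
    (hD : D.IsHermitian) (hD2 : D * D = D)
    (hP : P.IsHermitian) (hP2 : P * P = P)
    (N : ℕ) (hN : 1 ≤ N) :
    D * ((D * Uᴴ * P * U)ᴴ) ^ N * (D * Uᴴ * P * U) ^ N * D
      = (D * Uᴴ * P * U * D) ^ (2 * N) := by
  obtain ⟨m, rfl⟩ : ∃ m, N = m + 1 := ⟨N - 1, (Nat.succ_pred_eq_of_pos hN).symm⟩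
  set Q : Matrix (Fin n) (Fin n) ℂ := Uᴴ * P * U with hQ
  have hA : D * Uᴴ * P * U = D * Q := by rw [hQ, mul_assoc, mul_assoc, mul_assoc]
  have hAH : (D * Q)ᴴ = Q * D := by
    rw [hQ]
    simp [conjTranspose_mul, hP.eq, hD.eq, mul_assoc]
  rw [hA, hAH, mul_assoc _ ((D * Q) ^ (m + 1)) D, pow_proj D Q hD2 m,
    swap_pow D Q (m + 1), pow_proj D Q hD2 m, ← pow_add, two_mul]
end

section
/- Let H be a finite-dimensional complex Hilbert space, U unitary, Δ, Π orthogonal projections, M = Δ U† Π U Δ, and N ≥ 1 an integer. Then Δ − Δ [(Δ U† (I−Π) U)†]^N (Δ U† (I−Π) U)^N Δ = Δ − (Δ − M)^{2N}. Consequently, if φ is a unit eigenvector of M with eigenvalue λ satisfying Δφ = φ, then φ is an eigenvector of Δ − (Δ − M)^{2N} with eigenvalue 1 − (1−λ)^{2N}. -/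
/-! With `A = Δ U† (1 - Π) U` one has `Δ A = A` and `A Δ = Δ - M` (as `U† U = 1`), hence
`A^N Δ = (A Δ)^N = (Δ - M)^N` for `N ≥ 1`. So `Δ (A†)^N A^N Δ = ((Δ - M)^N)† (Δ - M)^N`,
which is `(Δ - M)^(2N)` because `Δ - M` is self-adjoint. On a common eigenvector `φ`
(`Δ φ = φ`, `M φ = λ φ`) the operator `Δ - M` acts as `1 - λ`. -/

open Matrix

theorem mul_pow_succ_of_mul_eq {M : Type*} [Monoid M] {a d : M} (hda : d * a = a) (k : ℕ) :
    (a * d) ^ (k + 1) = a ^ (k + 1) * d := by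
  induction k with
  | zero => simp
  | succ k ih => rw [pow_succ, ih, mul_assoc, ← mul_assoc d, hda, ← mul_assoc, ← pow_succ]

section StarRing

variable {R : Type*} [Ring R] [StarRing R] {u d p : R}

theorem mul_star_mul_one_sub_mul_mul (hu : star u * u = 1) (hd : d * d = d) :
    d * star u * (1 - p) * u * d = d - d * star u * p * u * d := by
  rw [mul_one_sub, sub_mul, sub_mul, mul_assoc d (star u) u, hu, mul_one, hd]

theorem mul_star_pow_mul_pow_mul (hu : star u * u = 1) (hd : IsSelfAdjoint d) (hd2 : d * d = d)
    (hp : IsSelfAdjoint p) {N : ℕ} (hN : N ≠ 0) :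
    d * star (d * star u * (1 - p) * u) ^ N * (d * star u * (1 - p) * u) ^ N * d
      = (d - d * star u * p * u * d) ^ (2 * N) := by
  set a := d * star u * (1 - p) * u
  set m := d * star u * p * u * d
  obtain ⟨k, rfl⟩ := Nat.exists_eq_succ_of_ne_zero hN
  have hda : d * a = a := by simp only [a, ← mul_assoc, hd2]
  have hsa : IsSelfAdjoint (d - m) := by
    refine hd.sub ?_
    simpa only [m, star_mul, star_star, hd.star_eq, mul_assoc] using hp.conjugate (d * star u)
  calc d * star a ^ (k + 1) * a ^ (k + 1) * d
      = star (a ^ (k + 1) * d) * (a ^ (k + 1) * d) := by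
        rw [star_mul (a ^ (k + 1)), star_pow, hd.star_eq, mul_assoc]
    _ = star ((d - m) ^ (k + 1)) * (d - m) ^ (k + 1) := by
        rw [← mul_pow_succ_of_mul_eq hda, mul_star_mul_one_sub_mul_mul hu hd2]
    _ = (d - m) ^ (2 * (k + 1)) := by rw [star_pow, hsa.star_eq, ← pow_add, two_mul]

end StarRing

theorem Matrix.pow_mulVec_of_mulVec_eq_smul {n R : Type*} [Fintype n] [DecidableEq n]
    [CommSemiring R] {A : Matrix n n R} {v : n → R} {c : R} (h : A *ᵥ v = c • v) (k : ℕ) :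
    (A ^ k) *ᵥ v = c ^ k • v := by
  induction k with
  | zero => simp
  | succ k ih => rw [pow_succ, ← mulVec_mulVec, h, mulVec_smul, ih, smul_smul, pow_succ, mul_comm]

theorem stmt4_general {n : ℕ} (U D P : Matrix (Fin n) (Fin n) ℂ)
    (hU : U ∈ Matrix.unitaryGroup (Fin n) ℂ)
    (hD : D.IsHermitian) (hD2 : D * D = D)
    (hP : P.IsHermitian)
    (N : ℕ) (hN : 1 ≤ N) :
    (D - D * ((D * Uᴴ * (1 - P) * U)ᴴ) ^ N * (D * Uᴴ * (1 - P) * U) ^ N * D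
        = D - (D - (D * Uᴴ * P * U * D)) ^ (2 * N)) ∧
      ∀ (μ : ℂ) (φ : Fin n → ℂ), φ ≠ 0 → D.mulVec φ = φ →
        (D * Uᴴ * P * U * D).mulVec φ = μ • φ →
        (D - (D - (D * Uᴴ * P * U * D)) ^ (2 * N)).mulVec φ
          = (1 - (1 - μ) ^ (2 * N)) • φ := by
  refine ⟨?_, fun μ φ _ hDφ hMφ => ?_⟩
  · simp only [← star_eq_conjTranspose]
    rw [mul_star_pow_mul_pow_mul (mem_unitaryGroup_iff'.mp hU) hD.isSelfAdjoint hD2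
      hP.isSelfAdjoint (by omega)]
  · have hstep : (D - D * Uᴴ * P * U * D) *ᵥ φ = (1 - μ) • φ := by
      rw [sub_mulVec, hDφ, hMφ, sub_smul, one_smul]
    rw [sub_mulVec, hDφ, pow_mulVec_of_mulVec_eq_smul hstep, sub_smul, one_smul]

/-- The operator identity underlying the OR-type repetition procedure, and its
consequence for eigenvectors of `M = Δ U† Π U Δ`. -/
theorem stmt4 {n : ℕ} (U D P : Matrix (Fin n) (Fin n) ℂ)
    (hU : U ∈ Matrix.unitaryGroup (Fin n) ℂ)
    (hD : D.IsHermitian) (hD2 : D * D = D)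
    (hP : P.IsHermitian) (hP2 : P * P = P)
    (N : ℕ) (hN : 1 ≤ N) :
    (D - D * ((D * Uᴴ * (1 - P) * U)ᴴ) ^ N * (D * Uᴴ * (1 - P) * U) ^ N * D
        = D - (D - (D * Uᴴ * P * U * D)) ^ (2 * N)) ∧
      ∀ (μ : ℂ) (φ : Fin n → ℂ), φ ≠ 0 → D.mulVec φ = φ →
        (D * Uᴴ * P * U * D).mulVec φ = μ • φ →
        (D - (D - (D * Uᴴ * P * U * D)) ^ (2 * N)).mulVec φ
          = (1 - (1 - μ) ^ (2 * N)) • φ :=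
  stmt4_general U D P hU hD hD2 hP N hN
end

section
/- For all reals c, s with 0 ≤ s < c ≤ 1, it holds that arccos(√s) > arccos(√c), and arccos(√s) − arccos(√c) ≥ (c − s)/π · 1/(√c(1−s) + √s(1−c) + 1) > 0; in particular the quantity ⌈log₂(2π/(arccos√s − arccos√c))⌉ is well-defined and is O(log(1/(c−s))). -/
lemma stmt17_key (c s : ℝ) (hs : 0 ≤ s) (hsc : s < c) (hc1 : c ≤ 1) :
    Real.arccos (Real.sqrt s) - Real.arccos (Real.sqrt c)
      ≥ Real.sqrt (c * (1 - s)) - Real.sqrt (s * (1 - c)) := by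
  have hc0 : (0:ℝ) ≤ c := le_trans hs hsc.le
  have hs1 : s ≤ 1 := le_trans hsc.le hc1
  set a := Real.arccos (Real.sqrt c) with ha
  set b := Real.arccos (Real.sqrt s) with hb
  have hsc1 : Real.sqrt c ≤ 1 := Real.sqrt_le_one.2 hc1
  have hss1 : Real.sqrt s ≤ 1 := Real.sqrt_le_one.2 hs1
  have hle : a ≤ b := (Real.strictAntiOn_arccos
      ⟨by linarith [Real.sqrt_nonneg s], hss1⟩
      ⟨by linarith [Real.sqrt_nonneg c], hsc1⟩
      (Real.sqrt_lt_sqrt hs hsc)).le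
  have ha0 : 0 ≤ a := Real.arccos_nonneg _
  have hbpi : b ≤ Real.pi := Real.arccos_le_pi _
  have hcosa : Real.cos a = Real.sqrt c :=
    Real.cos_arccos (by linarith [Real.sqrt_nonneg c]) hsc1
  have hcosb : Real.cos b = Real.sqrt s :=
    Real.cos_arccos (by linarith [Real.sqrt_nonneg s]) hss1
  have hsina : Real.sin a = Real.sqrt (1 - c) := by
    rw [ha, Real.sin_arccos, Real.sq_sqrt hc0]
  have hsinb : Real.sin b = Real.sqrt (1 - s) := by
    rw [hb, Real.sin_arccos, Real.sq_sqrt hs]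
  have hsindiff : Real.sin (b - a)
      = Real.sqrt (c * (1 - s)) - Real.sqrt (s * (1 - c)) := by
    rw [Real.sin_sub, hcosa, hcosb, hsina, hsinb,
      Real.sqrt_mul hc0, Real.sqrt_mul hs]
    ring
  have := Real.sin_le (by linarith : (0:ℝ) ≤ b - a)
  linarith [hsindiff ▸ this]

/-- The completeness–soundness angle gap: `arccos √s - arccos √c > 0`, a quantitative
lower bound for it, and the existence of a uniform constant `K` with
`arccos √s - arccos √c ≥ (c-s)/K`, so that the phase-estimation precision
`⌈log₂(2π/(arccos √s - arccos √c))⌉` is logarithmic in `1/(c-s)`. -/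
theorem stmt17 :
    (∀ c s : ℝ, 0 ≤ s → s < c → c ≤ 1 →
      0 < Real.arccos (Real.sqrt s) - Real.arccos (Real.sqrt c) ∧
      Real.arccos (Real.sqrt s) - Real.arccos (Real.sqrt c)
        ≥ (c - s) / Real.pi *
            (1 / (Real.sqrt (c * (1 - s)) + Real.sqrt (s * (1 - c)) + 1))) ∧
    ∃ K : ℝ, 0 < K ∧ ∀ c s : ℝ, 0 ≤ s → s < c → c ≤ 1 →
      Real.arccos (Real.sqrt s) - Real.arccos (Real.sqrt c) ≥ (c - s) / K := by
  have main : ∀ c s : ℝ, 0 ≤ s → s < c → c ≤ 1 →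
      0 < Real.arccos (Real.sqrt s) - Real.arccos (Real.sqrt c) ∧
      Real.arccos (Real.sqrt s) - Real.arccos (Real.sqrt c)
        ≥ (c - s) / Real.pi *
            (1 / (Real.sqrt (c * (1 - s)) + Real.sqrt (s * (1 - c)) + 1)) := by
    intro c s hs hsc hc1
    have hc0 : (0:ℝ) ≤ c := le_trans hs hsc.le
    have hs1 : s ≤ 1 := le_trans hsc.le hc1
    set A := Real.sqrt (c * (1 - s)) with hA
    set B := Real.sqrt (s * (1 - c)) with hB
    have hA2 : A ^ 2 = c * (1 - s) := Real.sq_sqrt (by nlinarith)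
    have hB2 : B ^ 2 = s * (1 - c) := Real.sq_sqrt (by nlinarith)
    have hA0 : 0 < A := Real.sqrt_pos.2 (by nlinarith)
    have hB0 : 0 ≤ B := Real.sqrt_nonneg _
    have hAB : A - B = (c - s) / (A + B) := by
      rw [eq_div_iff (by positivity)]
      nlinarith
    have hkey := stmt17_key c s hs hsc hc1
    have hABpos : 0 < A - B := by
      rw [hAB]; exact div_pos (by linarith) (by positivity)
    refine ⟨lt_of_lt_of_le hABpos hkey, ?_⟩
    have hpi : 3 < Real.pi := Real.pi_gt_three
    have h2 : (c - s) / Real.pi * (1 / (A + B + 1)) ≤ (c - s) / (A + B) := by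
      rw [div_mul_div_comm, mul_one]
      apply div_le_div_of_nonneg_left (by linarith) (by positivity)
      nlinarith
    linarith [hAB ▸ hkey]
  refine ⟨main, 3 * Real.pi, by positivity, ?_⟩
  intro c s hs hsc hc1
  have hc0 : (0:ℝ) ≤ c := le_trans hs hsc.le
  have hs1 : s ≤ 1 := le_trans hsc.le hc1
  have h := (main c s hs hsc hc1).2
  have hA1 : Real.sqrt (c * (1 - s)) ≤ 1 := Real.sqrt_le_one.2 (by nlinarith)
  have hB1 : Real.sqrt (s * (1 - c)) ≤ 1 := Real.sqrt_le_one.2 (by nlinarith)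
  have hAB0 : 0 ≤ Real.sqrt (c * (1 - s)) + Real.sqrt (s * (1 - c)) :=
    by positivity
  have hpi := Real.pi_gt_three
  have h2 : (c - s) / (3 * Real.pi) ≤ (c - s) / Real.pi *
      (1 / (Real.sqrt (c * (1 - s)) + Real.sqrt (s * (1 - c)) + 1)) := by
    rw [div_mul_div_comm, mul_one]
    apply div_le_div_of_nonneg_left (by linarith) (by positivity)
    nlinarith
  linarith
end
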